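/- Let q ∈ [−1/35, 1], and let Φ_q be the depolarizing channel on 6×6 complex matrices, regarded as acting on matrices over ℂ³⊗ℂ². Then Φ_q is entanglement-annihilating w.r.t. the cut 3|2 if and only if q ≤ 1/4. -/

import Mathlib

open Matrix Kronecker ComplexOrder BigOperators

namespace PaperEA

noncomputable section

/-- A matrix on a bipartite space is *separable* w.r.t. the cut `m|n` if it is a finite
sum of Kronecker products of positive semidefinite matrices. -/
def Sep {m n : Type*} [Fintype m] [Fintype n]
    (M : Matrix (m × n) (m × n) ℂ) : Prop :=
  ∃ (k : ℕ) (σ : Fin k → Matrix m m ℂ) (τ : Fin k → Matrix n n ℂ),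
    (∀ i, (σ i).PosSemidef) ∧ (∀ i, (τ i).PosSemidef) ∧ M = ∑ i, σ i ⊗ₖ τ i

/-- Density matrix: positive semidefinite with unit trace. -/
def IsDensity {m : Type*} [Fintype m] (ρ : Matrix m m ℂ) : Prop :=
  ρ.PosSemidef ∧ ρ.trace = 1

/-- A map on matrices is positive if it maps positive semidefinite matrices to
positive semidefinite matrices. -/
def IsPosMap {m n : Type*} [Fintype m] [Fintype n]
    (Φ : Matrix m m ℂ → Matrix n n ℂ) : Prop :=
  ∀ X : Matrix m m ℂ, X.PosSemidef → (Φ X).PosSemidef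

/-- Choi matrix `(Φ ⊗ Id)[|Ψ+⟩⟨Ψ+|]` of a map `Φ` from `m×m` matrices to `n×n` matrices;
its entry at `((x,k),(y,l))` is `card m⁻¹ * Φ(|k⟩⟨l|) x y`. -/
def choi {m n : Type*} [Fintype m] [DecidableEq m] [Fintype n]
    (Φ : Matrix m m ℂ → Matrix n n ℂ) : Matrix (n × m) (n × m) ℂ :=
  fun p q => (Fintype.card m : ℂ)⁻¹ * Φ (Matrix.single p.2 q.2 1) p.1 q.1

/-- Trace-preserving map. -/
def IsTP {m n : Type*} [Fintype m] [Fintype n]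
    (Φ : Matrix m m ℂ → Matrix n n ℂ) : Prop :=
  ∀ X : Matrix m m ℂ, (Φ X).trace = X.trace

/-- Completely positive map: positive semidefinite Choi matrix. -/
def IsCP {m n : Type*} [Fintype m] [DecidableEq m] [Fintype n]
    (Φ : Matrix m m ℂ → Matrix n n ℂ) : Prop :=
  (choi Φ).PosSemidef

/-- Channel: completely positive and trace-preserving. -/
def IsChannel {m n : Type*} [Fintype m] [DecidableEq m] [Fintype n]
    (Φ : Matrix m m ℂ → Matrix n n ℂ) : Prop :=
  IsCP Φ ∧ IsTP Φ

/-- Entanglement-breaking: separable Choi matrix (output|input cut). -/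
def IsEB {m n : Type*} [Fintype m] [DecidableEq m] [Fintype n]
    (Φ : Matrix m m ℂ → Matrix n n ℂ) : Prop :=
  Sep (choi Φ)

/-- Entanglement-breaking channel. -/
def IsEBChannel {m n : Type*} [Fintype m] [DecidableEq m] [Fintype n]
    (Φ : Matrix m m ℂ → Matrix n n ℂ) : Prop :=
  IsChannel Φ ∧ IsEB Φ

/-- Entanglement-annihilating map: every density matrix is sent to a matrix separable
w.r.t. the output cut `A'|B'`. -/
def IsEA {A B A' B' : Type*} [Fintype A] [Fintype B] [Fintype A'] [Fintype B']
    (Φ : Matrix (A × B) (A × B) ℂ → Matrix (A' × B') (A' × B') ℂ) : Prop :=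
  ∀ ρ : Matrix (A × B) (A × B) ℂ, IsDensity ρ → Sep (Φ ρ)

/-- Positive entanglement-annihilating map. -/
def IsPEA {A B A' B' : Type*} [Fintype A] [Fintype B] [Fintype A'] [Fintype B']
    (Φ : Matrix (A × B) (A × B) ℂ → Matrix (A' × B') (A' × B') ℂ) : Prop :=
  IsPosMap Φ ∧ IsEA Φ

/-- Block-positive (Hermitian) operator w.r.t. the cut `m|n`:
`⟨x⊗y| ξ |x⊗y⟩ ≥ 0` for all product vectors. -/
def BlockPositive {m n : Type*} [Fintype m] [Fintype n]
    (ξ : Matrix (m × n) (m × n) ℂ) : Prop :=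
  ξ.IsHermitian ∧ ∀ (x : m → ℂ) (y : n → ℂ),
    0 ≤ star (fun p : m × n => x p.1 * y p.2) ⬝ᵥ ξ *ᵥ fun p : m × n => x p.1 * y p.2

/-- Partial trace over the first tensor factor. -/
def ptrace1 {m n : Type*} [Fintype m] (Ω : Matrix (m × n) (m × n) ℂ) : Matrix n n ℂ :=
  fun k l => ∑ i : m, Ω (i, k) (i, l)

/-- Partial transpose w.r.t. the first tensor factor. -/
def ptrans1 {m n : Type*} (ρ : Matrix (m × n) (m × n) ℂ) : Matrix (m × n) (m × n) ℂ :=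
  fun p q => ρ (q.1, p.2) (p.1, q.2)

/-- Tensor product `Φ1 ⊗ Φ2` of (linear) maps on matrices. -/
def tensorMap {A B A' B' : Type*} [Fintype A] [DecidableEq A] [Fintype B] [DecidableEq B]
    [Fintype A'] [Fintype B']
    (Φ1 : Matrix A A ℂ → Matrix A' A' ℂ) (Φ2 : Matrix B B ℂ → Matrix B' B' ℂ)
    (X : Matrix (A × B) (A × B) ℂ) : Matrix (A' × B') (A' × B') ℂ :=
  ∑ a1 : A, ∑ a2 : A, ∑ b1 : B, ∑ b2 : B,
    X (a1, b1) (a2, b2) • (Φ1 (Matrix.single a1 a2 1) ⊗ₖ Φ2 (Matrix.single b1 b2 1))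

/-- Depolarizing map `Φ_q[X] = q X + (1−q) tr(X) I/d`. -/
def depolM {m : Type*} [Fintype m] [DecidableEq m] (q : ℝ)
    (X : Matrix m m ℂ) : Matrix m m ℂ :=
  (q : ℂ) • X + ((1 - q : ℝ) : ℂ) • X.trace • (Fintype.card m : ℂ)⁻¹ • (1 : Matrix m m ℂ)

def pauli1 : Matrix (Fin 2) (Fin 2) ℂ := !![0, 1; 1, 0]
def pauli2 : Matrix (Fin 2) (Fin 2) ℂ := !![0, -Complex.I; Complex.I, 0]
def pauli3 : Matrix (Fin 2) (Fin 2) ℂ := !![1, 0; 0, -1]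

/-- The unital qubit map `Υ_λ[X] = ½(tr(X) I + Σ_j λ_j tr(σ_j X) σ_j)`. -/
def Ups (l1 l2 l3 : ℝ) (X : Matrix (Fin 2) (Fin 2) ℂ) : Matrix (Fin 2) (Fin 2) ℂ :=
  (2 : ℂ)⁻¹ • (X.trace • (1 : Matrix (Fin 2) (Fin 2) ℂ)
    + (l1 : ℂ) • (pauli1 * X).trace • pauli1
    + (l2 : ℂ) • (pauli2 * X).trace • pauli2
    + (l3 : ℂ) • (pauli3 * X).trace • pauli3)

/-- The maximally entangled unit vector `|Ψ+⟩ = d^{-1/2} Σ_i |i⟩⊗|i⟩`. -/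
def maxEntVec (d : ℕ) : Fin d × Fin d → ℂ :=
  fun p => if p.1 = p.2 then ((Real.sqrt d : ℂ))⁻¹ else 0

/-- The maximally entangled state `|Ψ+⟩⟨Ψ+|`. -/
def maxEntState (d : ℕ) : Matrix (Fin d × Fin d) (Fin d × Fin d) ℂ :=
  vecMulVec (maxEntVec d) (star (maxEntVec d))

/-- The vector `|γ⟩ = (|1⟩⊗|1⟩ + |d⟩⊗|d⟩)/√2`. -/
def gammaVec (d : ℕ) : Fin d × Fin d → ℂ :=
  fun p => if (p.1 : ℕ) = (p.2 : ℕ) ∧ ((p.1 : ℕ) = 0 ∨ (p.1 : ℕ) = d - 1)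
    then ((Real.sqrt 2 : ℂ))⁻¹ else 0

/-- The state `|γ⟩⟨γ|`. -/
def gammaState (d : ℕ) : Matrix (Fin d × Fin d) (Fin d × Fin d) ℂ :=
  vecMulVec (gammaVec d) (star (gammaVec d))

end

end PaperEA

open PaperEA

/-!
Density matrices are sums of pure states and `Φ_q` is linear, so it suffices to show that
`Φ_q[|ψ⟩⟨ψ|] = q |ψ⟩⟨ψ| + c I` (with `c = (1 - q)/6`) is separable. A Schmidt decomposition
writes `ψ = a u₁ ⊗ v₁ + b u₂ ⊗ v₂`, and the only entangled part of `|ψ⟩⟨ψ|` is the coherence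
`a b (|u₁ v₁⟩⟨u₂ v₂| + h.c.)`. Averaging the product states `(x₁ + ω x₂) ⊗ (y₁ + ω̄ y₂)` over
`ω ∈ {±1, ±i}` produces such a coherence plus the four diagonal products `P[xᵢ] ⊗ P[yⱼ]`; with a
suitable choice of `xᵢ` this costs weight `|q|/2` on each `P[uᵢ] ⊗ P[vⱼ]`, which the noise `c I`
covers as soon as `|q|/2 ≤ c` and `|q|/2 ≤ c + q`, i.e. for `-1/8 ≤ q ≤ 1/4`.

Conversely, separable matrices have positive partial transpose. Pairing the partial transpose of
`Φ_q` applied to the Bell state `(|00⟩ + |11⟩)/√2` with `|01⟩ - |10⟩` gives `2(1 - q)/6 - q`, which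
is negative for `q > 1/4`.
-/

namespace PaperEA

section Kronecker

variable {l m n p : Type*}

theorem sub_kronecker (A₁ A₂ : Matrix l m ℂ) (B : Matrix n p ℂ) :
    (A₁ - A₂) ⊗ₖ B = A₁ ⊗ₖ B - A₂ ⊗ₖ B := by
  ext; simp [sub_mul]

theorem kronecker_sub (A : Matrix l m ℂ) (B₁ B₂ : Matrix n p ℂ) :
    A ⊗ₖ (B₁ - B₂) = A ⊗ₖ B₁ - A ⊗ₖ B₂ := by
  ext; simp [mul_sub]

end Kronecker

section Separable

variable {m n : Type*} [Fintype m] [Fintype n]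

theorem Sep.zero : Sep (0 : Matrix (m × n) (m × n) ℂ) :=
  ⟨0, finZeroElim, finZeroElim, finZeroElim, finZeroElim, by simp⟩

theorem Sep.add {M N : Matrix (m × n) (m × n) ℂ} (hM : Sep M) (hN : Sep N) : Sep (M + N) := by
  obtain ⟨k, σ, τ, hσ, hτ, rfl⟩ := hM
  obtain ⟨l, σ', τ', hσ', hτ', rfl⟩ := hN
  refine ⟨k + l, Fin.append σ σ', Fin.append τ τ', Fin.addCases ?_ ?_, Fin.addCases ?_ ?_, ?_⟩
  all_goals simp [Fin.sum_univ_add, *]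

theorem Sep.smul {M : Matrix (m × n) (m × n) ℂ} (hM : Sep M) {c : ℂ} (hc : 0 ≤ c) :
    Sep (c • M) := by
  obtain ⟨k, σ, τ, hσ, hτ, rfl⟩ := hM
  exact ⟨k, fun i => c • σ i, τ, fun i => (hσ i).smul hc, hτ,
    by simp [Finset.smul_sum, smul_kronecker]⟩

theorem Sep.sum {ι : Type*} (s : Finset ι) {M : ι → Matrix (m × n) (m × n) ℂ}
    (h : ∀ i ∈ s, Sep (M i)) : Sep (∑ i ∈ s, M i) :=
  Finset.sum_induction M Sep (fun _ _ => Sep.add) Sep.zero h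

theorem Sep.kronecker {σ : Matrix m m ℂ} {τ : Matrix n n ℂ} (hσ : σ.PosSemidef)
    (hτ : τ.PosSemidef) : Sep (σ ⊗ₖ τ) :=
  ⟨1, ![σ], ![τ], fun _ => by simpa, fun _ => by simpa, by simp⟩

theorem Sep.smul_kronecker {σ : Matrix m m ℂ} {τ : Matrix n n ℂ} (hσ : σ.PosSemidef)
    (hτ : τ.PosSemidef) {c : ℂ} (hc : 0 ≤ c) : Sep (c • (σ ⊗ₖ τ)) :=
  (Sep.kronecker hσ hτ).smul hc

theorem Sep.posSemidef_ptrans1 {M : Matrix (m × n) (m × n) ℂ} (hM : Sep M) :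
    (ptrans1 M).PosSemidef := by
  obtain ⟨k, σ, τ, hσ, hτ, rfl⟩ := hM
  have h : ptrans1 (∑ i, σ i ⊗ₖ τ i) = ∑ i, ptrans1 (σ i ⊗ₖ τ i) := by
    ext; simp [ptrans1, Matrix.sum_apply]
  rw [h]
  exact posSemidef_sum _ fun i _ => (hσ i).transpose.kronecker (hτ i)

end Separable

section Projections

variable {m : Type*} [Fintype m]

theorem isStarProjection_vecMulVec {u : m → ℂ} (hu : star u ⬝ᵥ u = 1) :
    IsStarProjection (vecMulVec u (star u)) :=
  ⟨by rw [IsIdempotentElem, vecMulVec_mul_vecMulVec, hu, one_smul],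
    (posSemidef_vecMulVec_self_star u).isHermitian⟩

theorem posSemidef_of_isStarProjection {P : Matrix m m ℂ} (hP : IsStarProjection P) :
    P.PosSemidef := by
  have h := posSemidef_conjTranspose_mul_self P
  rwa [← star_eq_conjTranspose, hP.isSelfAdjoint.star_eq, hP.isIdempotentElem.eq] at h

theorem exists_eq_smul_of_ne_zero {w : m → ℂ} (hw : w ≠ 0) :
    ∃ a : ℝ, 0 < a ∧ ∃ u : m → ℂ, star u ⬝ᵥ u = 1 ∧ w = (a : ℂ) • u := by
  obtain ⟨N, hN, hNw⟩ := RCLike.pos_iff_exists_ofReal.mp (dotProduct_star_self_pos_iff.mpr hw)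
  have ha : (Real.sqrt N : ℂ) ≠ 0 := by exact_mod_cast (Real.sqrt_pos.mpr hN).ne'
  refine ⟨Real.sqrt N, Real.sqrt_pos.mpr hN, (Real.sqrt N : ℂ)⁻¹ • w, ?_,
    by rw [smul_smul, mul_inv_cancel₀ ha, one_smul]⟩
  rw [star_smul, smul_dotProduct, dotProduct_smul, ← hNw]
  simp only [smul_eq_mul, star_inv₀, Complex.star_def, Complex.conj_ofReal]
  field_simp
  rw [← Complex.ofReal_pow, Real.sq_sqrt hN.le]
  rfl

variable [DecidableEq m]

theorem posSemidef_one_sub_vecMulVec {u : m → ℂ} (hu : star u ⬝ᵥ u = 1) :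
    (1 - vecMulVec u (star u)).PosSemidef :=
  posSemidef_of_isStarProjection (isStarProjection_vecMulVec hu).one_sub

theorem posSemidef_one_sub_vecMulVec_sub_vecMulVec {u₁ u₂ : m → ℂ}
    (hu₁ : star u₁ ⬝ᵥ u₁ = 1) (hu₂ : star u₂ ⬝ᵥ u₂ = 1) (hu₁₂ : star u₁ ⬝ᵥ u₂ = 0) :
    (1 - vecMulVec u₁ (star u₁) - vecMulVec u₂ (star u₂)).PosSemidef := by
  refine sub_sub (1 : Matrix m m ℂ) _ _ ▸ posSemidef_of_isStarProjection
    ((isStarProjection_vecMulVec hu₁).add (isStarProjection_vecMulVec hu₂) ?_).one_sub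
  rw [vecMulVec_mul_vecMulVec, hu₁₂, zero_smul, vecMulVec_zero]

end Projections

section ProductVectors

variable {m n : Type*}

def kronVec (x : m → ℂ) (y : n → ℂ) : m × n → ℂ := fun p => x p.1 * y p.2

theorem kronVec_zero_left (y : n → ℂ) : kronVec (0 : m → ℂ) y = 0 := by
  ext; simp [kronVec]

theorem kronVec_smul_left (c : ℂ) (x : m → ℂ) (y : n → ℂ) :
    kronVec (c • x) y = c • kronVec x y := by
  ext; simp [kronVec, mul_assoc]

theorem vecMulVec_kronVec (x x' : m → ℂ) (y y' : n → ℂ) :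
    vecMulVec (kronVec x y) (star (kronVec x' y')) =
      vecMulVec x (star x') ⊗ₖ vecMulVec y (star y') := by
  ext ⟨i, j⟩ ⟨i', j'⟩
  simp only [vecMulVec_apply, kronVec, kroneckerMap_apply, Pi.star_apply, star_mul']
  ring

theorem star_kronVec_dotProduct_kronVec [Fintype m] [Fintype n] (x x' : m → ℂ) (y y' : n → ℂ) :
    star (kronVec x y) ⬝ᵥ kronVec x' y' = (star x ⬝ᵥ x') * (star y ⬝ᵥ y') := by
  simp only [dotProduct, kronVec, Pi.star_apply, star_mul', Fintype.sum_prod_type,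
    Finset.sum_mul_sum]
  exact Finset.sum_congr rfl fun _ _ => Finset.sum_congr rfl fun _ _ => by ring

end ProductVectors

section Coherence

variable {m n : Type*}

theorem sum_phase_vecMulVec_kronecker (x₁ x₂ : m → ℂ) (y₁ y₂ : n → ℂ) :
    ∑ ω ∈ ({1, Complex.I, -1, -Complex.I} : Finset ℂ),
      vecMulVec (x₁ + ω • x₂) (star (x₁ + ω • x₂)) ⊗ₖ
        vecMulVec (y₁ + star ω • y₂) (star (y₁ + star ω • y₂)) =
    (4 : ℂ) • ((vecMulVec x₁ (star x₁) + vecMulVec x₂ (star x₂)) ⊗ₖ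
        (vecMulVec y₁ (star y₁) + vecMulVec y₂ (star y₂)) +
      (vecMulVec x₁ (star x₂) ⊗ₖ vecMulVec y₁ (star y₂) +
        vecMulVec x₂ (star x₁) ⊗ₖ vecMulVec y₂ (star y₁))) := by
  ext ⟨i, j⟩ ⟨i', j'⟩
  rw [Finset.sum_insert (by norm_num [Complex.ext_iff]),
    Finset.sum_insert (by norm_num [Complex.ext_iff]),
    Finset.sum_pair (by norm_num [Complex.ext_iff])]
  simp only [Matrix.add_apply, Matrix.smul_apply, kroneckerMap_apply, vecMulVec_apply,
    Pi.add_apply, Pi.smul_apply, Pi.star_apply, star_add, star_mul', smul_eq_mul, star_neg,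
    Complex.star_def, Complex.conj_I, map_one]
  ring_nf
  simp only [Complex.I_sq, Complex.I_pow_four]
  ring

theorem sep_kronecker_add_coherence [Fintype m] [Fintype n] (x₁ x₂ : m → ℂ) (y₁ y₂ : n → ℂ) :
    Sep ((vecMulVec x₁ (star x₁) + vecMulVec x₂ (star x₂)) ⊗ₖ
        (vecMulVec y₁ (star y₁) + vecMulVec y₂ (star y₂)) +
      (vecMulVec x₁ (star x₂) ⊗ₖ vecMulVec y₁ (star y₂) +
        vecMulVec x₂ (star x₁) ⊗ₖ vecMulVec y₂ (star y₁))) := by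
  have h := (Sep.sum ({1, Complex.I, -1, -Complex.I} : Finset ℂ) fun ω _ =>
    Sep.kronecker (posSemidef_vecMulVec_self_star (x₁ + ω • x₂))
      (posSemidef_vecMulVec_self_star (y₁ + star ω • y₂))).smul
        (Complex.zero_le_real.mpr (by norm_num : (0 : ℝ) ≤ 4⁻¹))
  rwa [sum_phase_vecMulVec_kronecker, smul_smul, show ((4⁻¹ : ℝ) : ℂ) * 4 = 1 by norm_num,
    one_smul] at h

theorem sep_kronecker_add_smul_coherence [Fintype m] [Fintype n] (u₁ u₂ : m → ℂ)
    (v₁ v₂ : n → ℂ) (α β s : ℝ) :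
    Sep ((((α ^ 2 : ℝ) : ℂ) • vecMulVec u₁ (star u₁) + ((β ^ 2 : ℝ) : ℂ) • vecMulVec u₂ (star u₂))
        ⊗ₖ (vecMulVec v₁ (star v₁) + ((s ^ 2 : ℝ) : ℂ) • vecMulVec v₂ (star v₂)) +
      ((α * β * s : ℝ) : ℂ) • (vecMulVec u₁ (star u₂) ⊗ₖ vecMulVec v₁ (star v₂) +
        vecMulVec u₂ (star u₁) ⊗ₖ vecMulVec v₂ (star v₁))) := by
  have h := sep_kronecker_add_coherence ((α : ℂ) • u₁) ((β : ℂ) • u₂) v₁ ((s : ℂ) • v₂)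
  simp only [star_smul, Complex.star_def, Complex.conj_ofReal, smul_vecMulVec, vecMulVec_smul,
    smul_kronecker, kronecker_smul, smul_smul] at h
  convert h using 2
  · push_cast; simp only [sq]
  · push_cast; module

end Coherence

theorem sub_abs_div_two_add_mul_nonneg {q c x : ℝ} (hc : |q| / 2 ≤ c) (hcq : |q| / 2 ≤ c + q)
    (hx₀ : 0 ≤ x) (hx₁ : x ≤ 1) : 0 ≤ c - |q| / 2 + q * x := by
  rcases abs_cases q with ⟨h, _⟩ | ⟨h, _⟩ <;> nlinarith

section PureStates

variable {m n : Type*} [Fintype m] [Fintype n] [DecidableEq m] [DecidableEq n]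

theorem sep_smul_vecMulVec_kronVec_add_smul_one {u : m → ℂ} {v : n → ℂ}
    (hu : star u ⬝ᵥ u = 1) (hv : star v ⬝ᵥ v = 1) {q c : ℝ} (hc : 0 ≤ c) (hcq : 0 ≤ c + q) :
    Sep ((q : ℂ) • vecMulVec (kronVec u v) (star (kronVec u v)) + (c : ℂ) • 1) := by
  set A := vecMulVec u (star u)
  set B := vecMulVec v (star v)
  have h : (q : ℂ) • vecMulVec (kronVec u v) (star (kronVec u v)) + (c : ℂ) • 1 =
      ((c + q : ℝ) : ℂ) • (A ⊗ₖ B) + (c : ℂ) • (A ⊗ₖ (1 - B)) + (c : ℂ) • ((1 - A) ⊗ₖ 1) := by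
    rw [vecMulVec_kronVec, ← one_kronecker_one, kronecker_sub, sub_kronecker]
    push_cast
    module
  have hA := posSemidef_vecMulVec_self_star u
  have hc₀ : (0 : ℂ) ≤ c := Complex.zero_le_real.mpr hc
  rw [h]
  exact ((Sep.smul_kronecker hA (posSemidef_vecMulVec_self_star v)
    (Complex.zero_le_real.mpr hcq)).add
    (Sep.smul_kronecker hA (posSemidef_one_sub_vecMulVec hv) hc₀)).add
    (Sep.smul_kronecker (posSemidef_one_sub_vecMulVec hu) .one hc₀)

theorem sep_smul_vecMulVec_add_smul_one_of_schmidt {u₁ u₂ : m → ℂ} {v₁ v₂ : n → ℂ}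
    (hu₁ : star u₁ ⬝ᵥ u₁ = 1) (hu₂ : star u₂ ⬝ᵥ u₂ = 1) (hu₁₂ : star u₁ ⬝ᵥ u₂ = 0)
    (hv : vecMulVec v₁ (star v₁) + vecMulVec v₂ (star v₂) = 1) {a b q c : ℝ}
    (hab : a ^ 2 + b ^ 2 = 1) (hc : |q| / 2 ≤ c) (hcq : |q| / 2 ≤ c + q) {ψ : m × n → ℂ}
    (hψ : ψ = (a : ℂ) • kronVec u₁ v₁ + (b : ℂ) • kronVec u₂ v₂) :
    Sep ((q : ℂ) • vecMulVec ψ (star ψ) + (c : ℂ) • 1) := by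
  obtain ⟨s, hs, hq⟩ : ∃ s : ℝ, s ^ 2 = 1 ∧ q = s * |q| := by
    rcases abs_choice q with h | h
    exacts [⟨1, by norm_num, by rw [h, one_mul]⟩, ⟨-1, by norm_num, by rw [h]; ring⟩]
  set r := |q|
  set A₁ := vecMulVec u₁ (star u₁)
  set A₂ := vecMulVec u₂ (star u₂)
  set B₁ := vecMulVec v₁ (star v₁)
  set B₂ := vecMulVec v₂ (star v₂)
  -- Swapping `a` and `b` in the second average spreads the cost evenly: weight `r / 2` on each
  -- `Aᵢ ⊗ Bⱼ`, since `a ^ 2 + b ^ 2 = 1`.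
  have hT := (sep_kronecker_add_smul_coherence u₁ u₂ v₁ v₂ a b s).add
    (sep_kronecker_add_smul_coherence u₁ u₂ v₁ v₂ b a s)
  have hw : ∀ x : ℝ, 0 ≤ x → x ≤ 1 → (0 : ℂ) ≤ ((c - r / 2 + q * x : ℝ) : ℂ) :=
    fun x hx₀ hx₁ => Complex.zero_le_real.mpr (sub_abs_div_two_add_mul_nonneg hc hcq hx₀ hx₁)
  have hw₀ : (0 : ℂ) ≤ ((c - r / 2 : ℝ) : ℂ) := by simpa using hw 0 le_rfl zero_le_one
  have hR : Sep ((c : ℂ) • ((1 - A₁ - A₂) ⊗ₖ 1) +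
      ((c - r / 2 + q * a ^ 2 : ℝ) : ℂ) • (A₁ ⊗ₖ B₁) + ((c - r / 2 : ℝ) : ℂ) • (A₁ ⊗ₖ B₂) +
      ((c - r / 2 : ℝ) : ℂ) • (A₂ ⊗ₖ B₁) + ((c - r / 2 + q * b ^ 2 : ℝ) : ℂ) • (A₂ ⊗ₖ B₂)) := by
    have hAB (x : m → ℂ) (y : n → ℂ) {z : ℂ} (hz : 0 ≤ z) :
        Sep (z • (vecMulVec x (star x) ⊗ₖ vecMulVec y (star y))) :=
      Sep.smul_kronecker (posSemidef_vecMulVec_self_star x) (posSemidef_vecMulVec_self_star y) hz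
    exact ((((Sep.smul_kronecker (posSemidef_one_sub_vecMulVec_sub_vecMulVec hu₁ hu₂ hu₁₂) .one
      (Complex.zero_le_real.mpr (by linarith [abs_nonneg q]))).add
      (hAB u₁ v₁ (hw _ (sq_nonneg a) (by nlinarith)))).add (hAB u₁ v₂ hw₀)).add
      (hAB u₂ v₁ hw₀)).add (hAB u₂ v₂ (hw _ (sq_nonneg b) (by nlinarith)))
  convert (hT.smul (Complex.zero_le_real.mpr (by positivity : 0 ≤ r / 2))).add hR using 1
  rw [hψ, ← one_kronecker_one, ← hv]
  simp only [vecMulVec_add, add_vecMulVec, star_add, star_smul, Complex.star_def,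
    Complex.conj_ofReal, smul_vecMulVec, vecMulVec_smul, vecMulVec_kronVec, add_kronecker,
    kronecker_add, sub_kronecker, smul_kronecker, kronecker_smul, hs]
  rw [hq]
  push_cast
  have hab' : (a : ℂ) ^ 2 + (b : ℂ) ^ 2 = 1 := by exact_mod_cast hab
  linear_combination (norm := module)
    hab' • ((-r / 2 : ℂ) • (A₁ ⊗ₖ B₁ + A₁ ⊗ₖ B₂ + A₂ ⊗ₖ B₁ + A₂ ⊗ₖ B₂))

end PureStates

section Schmidt

variable {m n : Type*} [Fintype m] [Fintype n] [DecidableEq n]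

theorem exists_schmidt_decomposition (ψ : m × n → ℂ) :
    ∃ (w : n → m → ℂ) (v : n → n → ℂ), (∀ k l, k ≠ l → star (w k) ⬝ᵥ w l = 0) ∧
      (∀ k l, star (v k) ⬝ᵥ v l = (1 : Matrix n n ℂ) k l) ∧
      ∑ k, vecMulVec (v k) (star (v k)) = 1 ∧ ψ = ∑ k, kronVec (w k) (v k) := by
  set M : Matrix m n ℂ := Matrix.of fun i j => ψ (i, j)
  have hH : (Mᴴ * M).IsHermitian := isHermitian_conjTranspose_mul_self M
  set U : Matrix n n ℂ := (hH.eigenvectorUnitary : Matrix n n ℂ)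
  have hUU : star U * U = 1 := Unitary.coe_star_mul_self hH.eigenvectorUnitary
  have hUU' : U * star U = 1 := Unitary.coe_mul_star_self hH.eigenvectorUnitary
  have hdiag : star U * (Mᴴ * M) * U = diagonal (RCLike.ofReal ∘ hH.eigenvalues) := by
    simpa using hH.conjStarAlgAut_star_eigenvectorUnitary
  -- `v k` is the conjugate of the `k`-th eigenvector of `Mᴴ * M`, and `w k` is `M` applied to
  -- that eigenvector, so the `w k` are orthogonal.
  refine ⟨fun k i => (M * U) i k, fun k j => star (U j k), fun k l hkl => ?_, fun k l => ?_,
    ?_, ?_⟩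
  · have h : star (fun i => (M * U) i k) ⬝ᵥ (fun i => (M * U) i l) =
        ((M * U)ᴴ * (M * U)) k l := by
      simp [dotProduct, mul_apply, conjTranspose_apply, mul_comm]
    rw [h, conjTranspose_mul, ← star_eq_conjTranspose, Matrix.mul_assoc, ← Matrix.mul_assoc _ M,
      ← Matrix.mul_assoc, hdiag, diagonal_apply_ne _ hkl]
  · have h : star (fun j => star (U j k)) ⬝ᵥ (fun j => star (U j l)) = (star U * U) l k := by
      simp [dotProduct, mul_apply, star_eq_conjTranspose, conjTranspose_apply, mul_comm]
    rw [h, hUU, one_apply, one_apply]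
    simp only [eq_comm]
  · ext j j'
    have h := congrFun (congrFun hUU' j') j
    simp only [mul_apply, star_apply, one_apply] at h
    simp only [Matrix.sum_apply, vecMulVec_apply, one_apply, Pi.star_apply, star_star]
    simpa [Complex.star_def, eq_comm, mul_comm] using h.symm
  · ext ⟨i, j⟩
    have h := congrFun (congrFun (show M * U * star U = M by
      rw [Matrix.mul_assoc, hUU', Matrix.mul_one]) i) j
    simp only [mul_apply, star_apply, of_apply, M] at h
    simp [kronVec, Finset.sum_apply, ← h, mul_apply, M]

end Schmidt

section Depolarizing

variable {m : Type*} [Fintype m] [DecidableEq m]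

noncomputable def depolLinearMap (q : ℝ) : Matrix m m ℂ →ₗ[ℂ] Matrix m m ℂ where
  toFun := depolM q
  map_add' X Y := by simp only [depolM, trace_add]; module
  map_smul' z X := by simp only [depolM, trace_smul, smul_eq_mul, RingHom.id_apply]; module

theorem depolM_vecMulVec (q : ℝ) {ψ : m → ℂ} (hψ : star ψ ⬝ᵥ ψ = 1) :
    depolM q (vecMulVec ψ (star ψ)) =
      (q : ℂ) • vecMulVec ψ (star ψ) + (((1 - q) / Fintype.card m : ℝ) : ℂ) • 1 := by
  rw [depolM, trace_vecMulVec, dotProduct_comm, hψ]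
  push_cast
  module

end Depolarizing

theorem isEA_of_sep_vecMulVec {A B A' B' : Type*} [Fintype A] [Fintype B] [Fintype A']
    [Fintype B'] (Φ : Matrix (A × B) (A × B) ℂ →ₗ[ℂ] Matrix (A' × B') (A' × B') ℂ)
    (h : ∀ ψ : A × B → ℂ, star ψ ⬝ᵥ ψ = 1 → Sep (Φ (vecMulVec ψ (star ψ)))) : IsEA Φ := by
  have hΦ : ∀ x : A × B → ℂ, Sep (Φ (vecMulVec x (star x))) := by
    intro x
    rcases eq_or_ne x 0 with rfl | hx
    · simpa using (Sep.zero : Sep (0 : Matrix (A' × B') (A' × B') ℂ))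
    obtain ⟨a, -, u, hu, rfl⟩ := exists_eq_smul_of_ne_zero hx
    have hsq : vecMulVec ((a : ℂ) • u) (star ((a : ℂ) • u)) =
        ((a ^ 2 : ℝ) : ℂ) • vecMulVec u (star u) := by
      simp only [star_smul, Complex.star_def, Complex.conj_ofReal, smul_vecMulVec,
        vecMulVec_smul, smul_smul]
      push_cast
      ring_nf
    rw [hsq, map_smul]
    exact (h u hu).smul (Complex.zero_le_real.mpr (sq_nonneg a))
  rintro ρ ⟨hρ, -⟩
  obtain ⟨k, v, rfl⟩ := posSemidef_iff_eq_sum_vecMulVec.mp hρ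
  rw [map_sum]
  exact Sep.sum _ fun i _ => hΦ (v i)

section QubitFactor

variable {m : Type*} [Fintype m] [DecidableEq m]

theorem sep_smul_vecMulVec_add_smul_one {ψ : m × Fin 2 → ℂ} (hψ : star ψ ⬝ᵥ ψ = 1) {q c : ℝ}
    (hc : |q| / 2 ≤ c) (hcq : |q| / 2 ≤ c + q) :
    Sep ((q : ℂ) • vecMulVec ψ (star ψ) + (c : ℂ) • 1) := by
  obtain ⟨w, v, hw, hv, hvsum, rfl⟩ := exists_schmidt_decomposition ψ
  rw [Fin.sum_univ_two] at hvsum hψ ⊢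
  have hv₀ : star (v 0) ⬝ᵥ v 0 = 1 := by simpa using hv 0 0
  have hv₁ : star (v 1) ⬝ᵥ v 1 = 1 := by simpa using hv 1 1
  have hnorm : star (w 0) ⬝ᵥ w 0 + star (w 1) ⬝ᵥ w 1 = 1 := by
    rw [← hψ]
    simp [dotProduct_add, add_dotProduct, star_kronVec_dotProduct_kronVec, hv, hw 0 1, hw 1 0]
  have hc₀ : 0 ≤ c := by linarith [abs_nonneg q]
  have hcq₀ : 0 ≤ c + q := by linarith [abs_nonneg q]
  rcases eq_or_ne (w 1) 0 with h₁ | h₁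
  · rw [h₁, dotProduct_zero, add_zero] at hnorm
    simpa [h₁, kronVec_zero_left] using
      sep_smul_vecMulVec_kronVec_add_smul_one hnorm hv₀ hc₀ hcq₀
  rcases eq_or_ne (w 0) 0 with h₀ | h₀
  · rw [h₀, star_zero, zero_dotProduct, zero_add] at hnorm
    simpa [h₀, kronVec_zero_left] using
      sep_smul_vecMulVec_kronVec_add_smul_one hnorm hv₁ hc₀ hcq₀
  obtain ⟨a, ha, u₁, hu₁, hw₀⟩ := exists_eq_smul_of_ne_zero h₀
  obtain ⟨b, hb, u₂, hu₂, hw₁⟩ := exists_eq_smul_of_ne_zero h₁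
  refine sep_smul_vecMulVec_add_smul_one_of_schmidt hu₁ hu₂ ?_ hvsum ?_ hc hcq
    (by rw [hw₀, hw₁, kronVec_smul_left, kronVec_smul_left])
  · have h := hw 0 1 (by decide)
    rw [hw₀, hw₁, star_smul, smul_dotProduct, dotProduct_smul] at h
    simpa [ha.ne', hb.ne'] using h
  · rw [hw₀, hw₁] at hnorm
    simp only [star_smul, smul_dotProduct, dotProduct_smul, hu₁, hu₂, Complex.star_def,
      Complex.conj_ofReal, smul_eq_mul, mul_one] at hnorm
    have hab : (a : ℂ) ^ 2 + (b : ℂ) ^ 2 = 1 := by linear_combination hnorm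
    exact_mod_cast hab

theorem isEA_depolM_of_abs_le {q : ℝ} (hc : |q| / 2 ≤ (1 - q) / Fintype.card (m × Fin 2))
    (hcq : |q| / 2 ≤ (1 - q) / Fintype.card (m × Fin 2) + q) :
    IsEA (depolM (m := m × Fin 2) q) :=
  isEA_of_sep_vecMulVec (depolLinearMap q) fun ψ hψ => by
    rw [depolLinearMap, LinearMap.coe_mk, AddHom.coe_mk, depolM_vecMulVec q hψ]
    exact sep_smul_vecMulVec_add_smul_one hψ hc hcq

end QubitFactor

section Necessity

variable {m n : Type*} [Fintype m] [Fintype n] [DecidableEq m] [DecidableEq n]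

theorem star_sub_single_dotProduct_mulVec (Y : Matrix m m ℂ) (i j : m) :
    star (Pi.single i 1 - Pi.single j 1) ⬝ᵥ Y *ᵥ (Pi.single i 1 - Pi.single j 1) =
      Y i i - Y i j - Y j i + Y j j := by
  simp [mulVec_sub, dotProduct_sub, sub_dotProduct, Pi.star_single]
  ring

theorem le_of_isEA_depolM [Nontrivial m] [Nontrivial n] {q : ℝ}
    (h : IsEA (depolM (m := m × n) q)) : q ≤ 2 / (Fintype.card (m × n) + 2) := by
  obtain ⟨i₀, i₁, hi⟩ := exists_pair_ne m
  obtain ⟨j₀, j₁, hj⟩ := exists_pair_ne n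
  set φ : m × n → ℂ := Pi.single (i₀, j₀) 1 + Pi.single (i₁, j₁) 1
  set ρ := ((2⁻¹ : ℝ) : ℂ) • vecMulVec φ (star φ)
  have hρ : IsDensity ρ := by
    refine ⟨(posSemidef_vecMulVec_self_star φ).smul (Complex.zero_le_real.mpr (by norm_num)), ?_⟩
    rw [trace_smul, trace_vecMulVec, dotProduct_comm]
    norm_num [φ, dotProduct_add, Pi.star_single, hi, hj]
  have hval : star (Pi.single (i₀, j₁) 1 - Pi.single (i₁, j₀) 1) ⬝ᵥ
      ptrans1 (depolM q ρ) *ᵥ (Pi.single (i₀, j₁) 1 - Pi.single (i₁, j₀) 1) =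
        ((2 * (1 - q) / Fintype.card (m × n) - q : ℝ) : ℂ) := by
    rw [star_sub_single_dotProduct_mulVec, depolM, hρ.2]
    simp [ρ, φ, ptrans1, one_apply, vecMulVec_apply, hi, hj, hi.symm, hj.symm]
    ring
  have hW := Complex.zero_le_real.mp
    (hval ▸ (h ρ hρ).posSemidef_ptrans1.dotProduct_mulVec_nonneg _)
  have hd : (0 : ℝ) < Fintype.card (m × n) := by exact_mod_cast Fintype.card_pos
  rw [sub_nonneg, le_div_iff₀ hd] at hW
  rw [le_div_iff₀ (by positivity)]
  linarith

end Necessity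

end PaperEA

/-- the global depolarizing channel `Φ_q` on a qutrit-qubit system is
entanglement-annihilating w.r.t. the cut 3|2 iff `q ≤ 1/4`. -/
theorem stmt_13 (q : ℝ) (hq : q ∈ Set.Icc (-(1 / 35) : ℝ) 1) :
    IsEA (depolM (m := Fin 3 × Fin 2) q) ↔ q ≤ 1 / 4 := by
  have hd : (Fintype.card (Fin 3 × Fin 2) : ℝ) = 6 := by simp
  refine ⟨fun h => ?_, fun hq₄ => ?_⟩
  · have h' := le_of_isEA_depolM h
    rw [hd] at h'
    linarith
  · apply isEA_depolM_of_abs_le <;> rw [hd] <;>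
      rcases abs_cases q with ⟨h, _⟩ | ⟨h, _⟩ <;> linarith [hq.1]
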